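/- Assume Souslin's Hypothesis, i.e. that every ccc linearly ordered topological space is separable. If a compact Hausdorff space X which is a continuous image of some compact linearly ordered topological space contains no dense metrizable subspace, then X contains an uncountable discrete subspace. -/

import Mathlib

universe u

open Set Topology

/-- The character of a space `X` at a point `x`: the least cardinality of a
neighborhood base of `X` at `x`. -/
noncomputable def nhdsChar (X : Type u) [TopologicalSpace X] (x : X) : Cardinal.{u} :=
  sInf { c | ∃ B : Set (Set X), Cardinal.mk B = c ∧ (∀ U ∈ B, U ∈ nhds x) ∧
      ∀ V ∈ nhds x, ∃ U ∈ B, U ⊆ V }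

/-- The character of a space: `χ(X) = sup_{x ∈ X} χ(x, X)`. -/
noncomputable def spaceChar (X : Type u) [TopologicalSpace X] : Cardinal.{u} :=
  ⨆ x : X, nhdsChar X x

/-- The cellularity of a space: the supremum of cardinalities of pairwise disjoint
families of nonempty open subsets. -/
noncomputable def cellularity (X : Type u) [TopologicalSpace X] : Cardinal.{u} :=
  sSup { c | ∃ 𝒰 : Set (Set X), Cardinal.mk 𝒰 = c ∧ (∀ U ∈ 𝒰, IsOpen U ∧ U.Nonempty) ∧
      𝒰.PairwiseDisjoint id }

/-- The density of a space: the least cardinality of a dense subset. -/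
noncomputable def density (X : Type u) [TopologicalSpace X] : Cardinal.{u} :=
  sInf { c | ∃ D : Set X, Cardinal.mk D = c ∧ Dense D }

/-- The weight of a space: the least cardinality of a base for the topology. -/
noncomputable def weight (X : Type u) [TopologicalSpace X] : Cardinal.{u} :=
  sInf { c | ∃ B : Set (Set X), Cardinal.mk B = c ∧ TopologicalSpace.IsTopologicalBasis B }

/-- A surjective map is irreducible if no proper closed subset maps onto the codomain. -/
def IsIrreducibleMap {K : Type*} {X : Type*} [TopologicalSpace K] [TopologicalSpace X]
    (f : K → X) : Prop :=
  Function.Surjective f ∧ ∀ A : Set K, IsClosed A → A ≠ univ → f '' A ≠ univ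

/-- `C` is an order component of `A`: a maximal convex subset of `A`. -/
def IsOrderComponent {K : Type*} [LinearOrder K] (A C : Set K) : Prop :=
  C ⊆ A ∧ C.OrdConnected ∧ ∀ C' : Set K, C ⊆ C' → C' ⊆ A → C'.OrdConnected → C' = C

/-- A map from a linearly ordered set is order-light if every order component of every
fiber is a singleton. -/
def OrderLight {K : Type*} {X : Type*} [LinearOrder K] (f : K → X) : Prop :=
  ∀ x : X, ∀ C : Set K, IsOrderComponent (f ⁻¹' {x}) C → ∃ k, C = {k}

/-- The countable chain condition: every pairwise disjoint family of nonempty open sets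
is countable. -/
def CCC (X : Type*) [TopologicalSpace X] : Prop :=
  ∀ 𝒰 : Set (Set X), (∀ U ∈ 𝒰, IsOpen U ∧ U.Nonempty) → 𝒰.PairwiseDisjoint id → 𝒰.Countable

/-- A space is non-archimedean if it has a base any two members of which are either
disjoint or comparable by inclusion. -/
def NonArchimedean (X : Type*) [TopologicalSpace X] : Prop :=
  ∃ B : Set (Set X), TopologicalSpace.IsTopologicalBasis B ∧
    ∀ U ∈ B, ∀ V ∈ B, Disjoint U V ∨ U ⊆ V ∨ V ⊆ U

/-- A space is perfectly normal if it is normal and every closed set is a Gδ-set. -/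
def PerfNormal (X : Type*) [TopologicalSpace X] : Prop :=
  NormalSpace X ∧ ∀ A : Set X, IsClosed A → IsGδ A

/-- `X` is a continuous image of some compact linearly ordered topological space
(a linearly ordered set equipped with its order topology). -/
def ContinuousImageOfCompactLOTS (X : Type u) [TopologicalSpace X] : Prop :=
  ∃ (K : Type u) (lo : LinearOrder K) (tK : TopologicalSpace K),
    letI := lo; letI := tK;
    OrderTopology K ∧ CompactSpace K ∧ ∃ f : K → X, Continuous f ∧ Function.Surjective f

/-- A closed set `A` is a strong T-set: the boundary of each connected component of the
complement consists of exactly two points, and each such component is homeomorphic to the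
open unit interval `(0,1)`. -/
def IsStrongTSet {Y : Type*} [TopologicalSpace Y] (A : Set Y) : Prop :=
  IsClosed A ∧ ∀ x ∈ Aᶜ,
    (∃ a b : Y, a ≠ b ∧ frontier (connectedComponentIn Aᶜ x) = {a, b}) ∧
    Nonempty (↥(connectedComponentIn Aᶜ x) ≃ₜ ↥(Ioo (0:ℝ) 1))

/-- Souslin's Hypothesis: every ccc LOTS is separable. -/
def SouslinHypothesis : Prop :=
  ∀ (L : Type u) (lo : LinearOrder L) (tL : TopologicalSpace L),
    letI := lo; letI := tL;
    OrderTopology L → CCC L → TopologicalSpace.SeparableSpace L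

/-!
If `X` is not ccc, picking one point in each member of an uncountable disjoint family of open
sets gives an uncountable discrete subspace. If `X` is ccc, write `X = f(K)` with `K` a compact
LOTS and shrink `K` by Zorn to a compact `M ⊆ K` on which `f` is irreducible. Then
`U ↦ X \ f(M \ U)` sends disjoint nonempty open sets of `M` to disjoint nonempty open sets of `X`,
so `M` is a ccc LOTS, hence separable by Souslin's Hypothesis. In a separable LOTS every closed
set is a Gδ, so every fibre of `f` is a Gδ in `M` and, `f` being closed, every point of `X` is a
Gδ. A compact Hausdorff space with Gδ points is first countable, so any countable dense subset of
the separable space `X` is second countable and regular, hence metrizable.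
-/

open TopologicalSpace Filter

theorem exists_uncountable_discrete_of_not_ccc {X : Type*} [TopologicalSpace X] (h : ¬CCC X) :
    ∃ D : Set X, ¬D.Countable ∧ DiscreteTopology D := by
  simp only [CCC, not_forall] at h
  obtain ⟨𝒰, h𝒰, hdisj, hunc⟩ := h
  choose p hp using fun U : 𝒰 => (h𝒰 U U.2).2
  have hp_eq {U V : 𝒰} (hU : p U ∈ (V : Set X)) : U = V :=
    Subtype.ext <| hdisj.elim U.2 V.2 (not_disjoint_iff.2 ⟨p U, hp U, hU⟩)
  refine ⟨range p, fun hc => hunc ?_, discreteTopology_subtype_iff'.2 ?_⟩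
  · have : Countable (range p) := hc.to_subtype
    have hinj : Function.Injective p := fun U V (h : p U = p V) => hp_eq (h ▸ hp V)
    exact countable_coe_iff.1 (rangeFactorization_injective.2 hinj).countable
  · rintro _ ⟨U, rfl⟩
    refine ⟨U, (h𝒰 U U.2).1, subset_antisymm ?_ (singleton_subset_iff.2 ⟨hp U, U, rfl⟩)⟩
    rintro _ ⟨hV, V, rfl⟩
    exact congrArg p (hp_eq hV)

theorem TopologicalSpace.eq_of_le_of_compactSpace_of_t2Space {X : Type*}
    {t t' : TopologicalSpace X} (h : t ≤ t') [@CompactSpace X t] [@T2Space X t'] : t = t' := by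
  refine le_antisymm h fun U hU => ?_
  have := @Continuous.isClosedMap X X t t' _ _ id (continuous_id_of_le h) Uᶜ
    (@IsOpen.isClosed_compl X t U hU)
  rw [image_id] at this
  exact (@isClosed_compl_iff X t' U).1 this

theorem orderTopology_of_isCompact {K : Type*} [LinearOrder K] [TopologicalSpace K]
    [OrderTopology K] {s : Set K} (hs : IsCompact s) : OrderTopology s := by
  have : CompactSpace s := isCompact_iff_compactSpace.1 hs
  have : @T2Space s (Preorder.topology s) := by
    let := Preorder.topology s
    have : OrderTopology s := ⟨rfl⟩
    infer_instance
  refine ⟨eq_of_le_of_compactSpace_of_t2Space (le_generateFrom ?_)⟩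
  rintro _ ⟨a, rfl | rfl⟩
  · exact isOpen_Ioi.preimage continuous_subtype_val
  · exact isOpen_Iio.preimage continuous_subtype_val

theorem exists_isCompact_isIrreducibleMap_domRestrict {K X : Type u} [TopologicalSpace K]
    [TopologicalSpace X] [CompactSpace K] [T1Space X] {f : K → X} (hf : Continuous f)
    (hfs : Function.Surjective f) :
    ∃ M : Set K, IsCompact M ∧ IsIrreducibleMap (M.domRestrict f) := by
  obtain ⟨M, hMc, hMs, hM⟩ := exists_compact_surjective_zorn_subset hf hfs
  refine ⟨M, isCompact_iff_compactSpace.2 hMc, fun x => ?_, fun A hA hAM => hM A hAM hA⟩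
  obtain ⟨k, hk, rfl⟩ := hMs.symm ▸ mem_univ x
  exact ⟨⟨k, hk⟩, rfl⟩

theorem IsIrreducibleMap.kernImage_nonempty {K X : Type*} [TopologicalSpace K]
    [TopologicalSpace X] {f : K → X} (hf : IsIrreducibleMap f) {U : Set K} (hU : IsOpen U)
    (hne : U.Nonempty) : (kernImage f U).Nonempty := by
  rw [kernImage_eq_compl, nonempty_compl]
  exact hf.2 _ hU.isClosed_compl (compl_ne_univ.2 hne)

theorem CCC.of_isIrreducibleMap {K X : Type*} [TopologicalSpace K] [TopologicalSpace X]
    (hX : CCC X) {f : K → X} (hf : IsIrreducibleMap f) (hfc : IsClosedMap f) : CCC K := by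
  intro 𝒰 h𝒰 hdisj
  have hdisj' : 𝒰.PairwiseDisjoint (kernImage f) := fun U hU V hV hUV => by
    refine disjoint_left.2 fun y hyU hyV => ?_
    obtain ⟨k, rfl⟩ := hf.1 y
    exact (hdisj hU hV hUV).ne_of_mem (hyU rfl) (hyV rfl) rfl
  have hne {U} (hU : U ∈ 𝒰) : (kernImage f U).Nonempty :=
    hf.kernImage_nonempty (h𝒰 U hU).1 (h𝒰 U hU).2
  have hinj : InjOn (kernImage f) 𝒰 := fun U hU V hV h => by
    by_contra hUV
    have : Disjoint (kernImage f U) (kernImage f V) := hdisj' hU hV hUV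
    exact (hne hU).ne_empty (disjoint_self.1 (h ▸ this))
  refine MapsTo.countable_of_injOn (mapsTo_image _ 𝒰) hinj
    (hX _ ?_ (hinj.pairwiseDisjoint_image.2 hdisj'))
  rintro _ ⟨U, hU, rfl⟩
  exact ⟨isClosedMap_iff_kernImage.1 hfc (h𝒰 U hU).1, hne hU⟩

section LinearOrder

variable {L : Type*} [LinearOrder L] [TopologicalSpace L] [OrderTopology L]

theorem Dense.exists_le_mem_or_isLeast {D C : Set L} (hD : Dense D) (hC : C.OrdConnected)
    {x : L} (hx : x ∈ C) : ∃ a ∈ C, a ≤ x ∧ (a ∈ D ∨ IsLeast C a) := by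
  by_cases hxC : IsLeast C x
  · exact ⟨x, hx, le_rfl, .inr hxC⟩
  obtain ⟨y, hy, hyx⟩ : ∃ y ∈ C, y < x := by simpa [IsLeast, hx, lowerBounds] using hxC
  by_cases hyC : IsLeast C y
  · exact ⟨y, hy, hyx.le, .inr hyC⟩
  obtain ⟨z, hz, hzy⟩ : ∃ z ∈ C, z < y := by simpa [IsLeast, hy, lowerBounds] using hyC
  -- stepping down twice makes `Ioo z x` nonempty; `Ioo y x` alone may be empty
  obtain ⟨d, ⟨hzd, hdx⟩, hd⟩ := hD.inter_open_nonempty _ isOpen_Ioo ⟨y, hzy, hyx⟩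
  exact ⟨d, hC.out hz hx ⟨hzd.le, hdx.le⟩, hdx.le, .inl hd⟩

theorem Dense.exists_ge_mem_or_isGreatest {D C : Set L} (hD : Dense D) (hC : C.OrdConnected)
    {x : L} (hx : x ∈ C) : ∃ b ∈ C, x ≤ b ∧ (b ∈ D ∨ IsGreatest C b) :=
  hD.orderDual.exists_le_mem_or_isLeast (C := OrderDual.ofDual ⁻¹' C) hC.dual hx

theorem isOpen_ordConnectedComponent {U : Set L} (hU : IsOpen U) (x : L) :
    IsOpen (ordConnectedComponent U x) := by
  refine isOpen_iff_mem_nhds.2 fun y hy => ?_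
  rw [ordConnectedComponent_eq hy]
  exact ordConnectedComponent_mem_nhds.2 (hU.mem_nhds (ordConnectedComponent_subset hy))

def ordComponentEnds (U : Set L) : Set L :=
  {a | IsLeast (ordConnectedComponent U a) a ∨ IsGreatest (ordConnectedComponent U a) a}

theorem IsOpen.countable_ordComponentEnds {U D : Set L} (hU : IsOpen U) (hD : D.Countable)
    (hDd : Dense D) : (ordComponentEnds U).Countable := by
  have hleast (s : Set L) : {a | IsLeast s a}.Countable :=
    Subsingleton.countable fun _ h₁ _ h₂ => h₁.unique h₂
  have hgreatest (s : Set L) : {a | IsGreatest s a}.Countable :=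
    Subsingleton.countable fun _ h₁ _ h₂ => h₁.unique h₂
  refine (hD.biUnion fun d _ =>
    (hleast (ordConnectedComponent U d)).union (hgreatest (ordConnectedComponent U d))).mono ?_
  intro a (ha : IsLeast _ a ∨ IsGreatest _ a)
  have haU : a ∈ ordConnectedComponent U a := by
    rcases ha with h | h
    exacts [h.1, h.1]
  obtain ⟨d, hda, hd⟩ := hDd.inter_open_nonempty _ (isOpen_ordConnectedComponent hU a) ⟨a, haU⟩
  rw [ordConnectedComponent_eq hda] at ha
  exact mem_biUnion hd ha

/- `Aᶜ` is the union of the closed intervals inside it whose endpoints lie in the countable dense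
set or are endpoints of convex components of `Aᶜ`. -/
theorem IsClosed.isGδ_of_separableSpace [SeparableSpace L] {A : Set L} (hA : IsClosed A) :
    IsGδ A := by
  obtain ⟨D, hDc, hDd⟩ := exists_countable_dense L
  set S := D ∪ ordComponentEnds Aᶜ
  have hS : S.Countable := hDc.union (hA.isOpen_compl.countable_ordComponentEnds hDc hDd)
  set I := S ×ˢ S ∩ {p | Icc p.1 p.2 ⊆ Aᶜ}
  suffices A = ⋂ p ∈ I, (Icc p.1 p.2)ᶜ from
    this ▸ .biInter_of_isOpen ((hS.prod hS).mono inter_subset_left)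
      fun p _ => isClosed_Icc.isOpen_compl
  refine subset_antisymm (fun x hx => mem_iInter₂.2 fun p hp hxp => hp.2 hxp hx) fun x hx => ?_
  by_contra hxA
  set C := ordConnectedComponent Aᶜ x
  have hxC : x ∈ C := self_mem_ordConnectedComponent.2 hxA
  have hC {c} (hc : c ∈ C) : ordConnectedComponent Aᶜ c = C := (ordConnectedComponent_eq hc).symm
  obtain ⟨a, haC, hax, ha⟩ := hDd.exists_le_mem_or_isLeast inferInstance hxC
  obtain ⟨b, hbC, hxb, hb⟩ := hDd.exists_ge_mem_or_isGreatest inferInstance hxC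
  have hab : Icc a b ⊆ Aᶜ := (Set.OrdConnected.out inferInstance haC hbC).trans
    ordConnectedComponent_subset
  have hI : (a, b) ∈ I := by
    refine ⟨⟨?_, ?_⟩, hab⟩
    · rcases ha with h | h
      exacts [.inl h, .inr (.inl (hC haC ▸ h))]
    · rcases hb with h | h
      exacts [.inl h, .inr (.inr (hC hbC ▸ h))]
  exact mem_iInter₂.1 hx (a, b) hI ⟨hax, hxb⟩

end LinearOrder

theorem IsClosedMap.isGδ_of_isGδ_preimage {X Y : Type*} [TopologicalSpace X]
    [TopologicalSpace Y] {f : X → Y} (hf : IsClosedMap f) (hsurj : Function.Surjective f)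
    {s : Set Y} (hs : IsGδ (f ⁻¹' s)) : IsGδ s := by
  obtain ⟨T, hTo, hTc, hT⟩ := hs
  have hs : s = ⋂ u ∈ T, kernImage f u := by
    rw [← (kernImage_preimage_eq_iff (f := f) (s := s)).2 (by simp [hsurj.range_eq]), hT]
    exact Set.preimage_kernImage.u_sInf
  rw [hs]
  exact .biInter_of_isOpen hTc fun u hu => isClosedMap_iff_kernImage.1 hf (hTo u hu)

theorem isCountablyGenerated_nhds_of_isGδ_singleton {X : Type*} [TopologicalSpace X]
    [CompactSpace X] [T2Space X] {x : X} (hx : IsGδ ({x} : Set X)) :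
    (𝓝 x).IsCountablyGenerated := by
  obtain ⟨U, hUo, hUx⟩ := isGδ_iff_eq_iInter_nat.1 hx
  have hU (n : ℕ) : U n ∈ 𝓝 x := (hUo n).mem_nhds (iInter_subset U n (hUx.subset rfl))
  choose C hCx hCc hCU using fun n => exists_mem_nhds_isClosed_subset (hU n)
  refine isCountablyGenerated_of_seq
    ⟨C, le_antisymm (le_iInf fun n => le_principal_iff.2 (hCx n)) fun O (hO : O ∈ 𝓝 x) => ?_⟩
  -- `⋂ n, C n = {x}` misses the compact set `(interior O)ᶜ`, hence so do finitely many `C n`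
  obtain ⟨t, ht⟩ := (isOpen_interior (s := O)).isClosed_compl.isCompact.elim_finite_subfamily_closed
    C hCc <| by
      refine eq_empty_of_forall_notMem fun y ⟨hyO, hyC⟩ => hyO ?_
      have : y ∈ ({x} : Set X) := hUx ▸ mem_iInter.2 fun n => hCU n (mem_iInter.1 hyC n)
      exact (mem_singleton_iff.1 this) ▸ mem_interior_iff_mem_nhds.2 hO
  refine mem_of_superset
    ((biInter_finset_mem t).2 fun n _ => mem_iInf_of_mem n (mem_principal_self _)) fun y hy => ?_
  by_contra hyO
  exact ht.subset ⟨fun h => hyO (interior_subset h), hy⟩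

theorem SH_uncountable_discrete (hSH : SouslinHypothesis.{u}) (X : Type u)
    [TopologicalSpace X] [T2Space X] [CompactSpace X]
    (hX : ContinuousImageOfCompactLOTS X)
    (hnd : ¬∃ D : Set X, Dense D ∧ TopologicalSpace.MetrizableSpace ↥D) :
    ∃ D : Set X, ¬D.Countable ∧ DiscreteTopology ↥D := by
  by_cases hccc : CCC X
  swap
  · exact exists_uncountable_discrete_of_not_ccc hccc
  obtain ⟨K, _, _, _, _, f, hf, hfs⟩ := hX
  obtain ⟨M, hMc, hg⟩ := exists_isCompact_isIrreducibleMap_domRestrict hf hfs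
  have : CompactSpace M := isCompact_iff_compactSpace.1 hMc
  have hgc : Continuous (M.domRestrict f) := hf.comp continuous_subtype_val
  have hM : OrderTopology M := orderTopology_of_isCompact hMc
  have : SeparableSpace M := hSH M _ _ hM (hccc.of_isIrreducibleMap hg hgc.isClosedMap)
  have : FirstCountableTopology X := ⟨fun x => isCountablyGenerated_nhds_of_isGδ_singleton <|
    hgc.isClosedMap.isGδ_of_isGδ_preimage hg.1
      (isClosed_singleton.preimage hgc).isGδ_of_separableSpace⟩
  have : SeparableSpace X := hg.1.denseRange.separableSpace hgc
  obtain ⟨D, hDc, hDd⟩ := exists_countable_dense X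
  have : Countable D := hDc.to_subtype
  exact (hnd ⟨D, hDd, inferInstance⟩).elim
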